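/- Let G be a finite simple connected graph with nonempty sink Z and fix a starting vertex a and an initial rotor configuration ρ. If after m sequential rotor walks the rotor configuration returns to ρ (i.e., σ^m(ρ) = ρ), then for every vertex x and every neighbor y of x, the total number of traversals of the directed edge (y,x) over the m walks equals S_m(ρ,y)/deg(y), where S_m(ρ,y) is the total number of visits to y. -/

import Mathlib

open MeasureTheory Filter ENNReal Set

namespace RotorWalk

variable {V : Type*} [DecidableEq V]

/-- One step of the rotor walk with local mechanisms `τ`:
the rotor at the current position is advanced and the walker follows it. -/
def step (τ : V → V → V) (p : V × (V → V)) : V × (V → V) :=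
  (τ p.1 (p.2 p.1), Function.update p.2 p.1 (τ p.1 (p.2 p.1)))

/-- Trajectory (position, rotor configuration) of the rotor walk started at `a`
with initial rotor configuration `ρ`. -/
def traj (τ : V → V → V) (a : V) (ρ : V → V) : ℕ → V × (V → V)
  | 0 => (a, ρ)
  | t + 1 => step τ (traj τ a ρ t)

/-- Position of the walker at time `t`. -/
def pos (τ : V → V → V) (a : V) (ρ : V → V) (t : ℕ) : V := (traj τ a ρ t).1

/-- Rotor configuration at time `t`. -/
def conf (τ : V → V → V) (a : V) (ρ : V → V) (t : ℕ) : V → V := (traj τ a ρ t).2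

/-- The walk has not hit the sink `Z` up to and including time `t`. -/
def aliveAt (τ : V → V → V) (Z : Set V) (a : V) (ρ : V → V) (t : ℕ) : Prop :=
  ∀ s ≤ t, pos τ a ρ s ∉ Z

/-- Odometer: the number of visits to `x` strictly before hitting the sink `Z`. -/
noncomputable def odometer (τ : V → V → V) (Z : Set V) (a : V) (ρ : V → V) (x : V) : ℕ∞ :=
  {t : ℕ | aliveAt τ Z a ρ t ∧ pos τ a ρ t = x}.encard

/-- Number of traversals of the directed edge `(y, x)` strictly before hitting `Z`. -/
noncomputable def edgeCount (τ : V → V → V) (Z : Set V) (a : V) (ρ : V → V) (y x : V) : ℕ∞ :=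
  {t : ℕ | aliveAt τ Z a ρ t ∧ pos τ a ρ t = y ∧ pos τ a ρ (t + 1) = x}.encard

open Classical in
/-- The final rotor configuration: the configuration at the hitting time of `Z` if the walk
hits `Z`, and otherwise the pointwise eventual value of the rotor configuration
(which exists when the walk is transient). -/
noncomputable def finalConf (τ : V → V → V) (Z : Set V) (a : V) (ρ : V → V) : V → V :=
  if ∃ t, pos τ a ρ t ∈ Z then conf τ a ρ (sInf {t | pos τ a ρ t ∈ Z})
  else fun x => if h : ∃ v, ∀ᶠ t in atTop, conf τ a ρ t x = v then h.choose else ρ x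

/-- Total number of visits to `x` by `n` sequential rotor walks (rotors not reset). -/
noncomputable def Svis (τ : V → V → V) (Z : Set V) (a : V) (ρ : V → V) (n : ℕ) (x : V) : ℕ∞ :=
  ∑ i ∈ Finset.range n, odometer τ Z a ((finalConf τ Z a)^[i] ρ) x

/-- Total number of traversals of the directed edge `(y,x)` by `n` sequential rotor walks. -/
noncomputable def Sedge (τ : V → V → V) (Z : Set V) (a : V) (ρ : V → V) (n : ℕ) (y x : V) : ℕ∞ :=
  ∑ i ∈ Finset.range n, edgeCount τ Z a ((finalConf τ Z a)^[i] ρ) y x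

/-- The rotor walk is transient: every vertex is visited finitely often (before hitting `Z`). -/
def IsTransientWalk (τ : V → V → V) (Z : Set V) (a : V) (ρ : V → V) : Prop :=
  ∀ x : V, {t : ℕ | aliveAt τ Z a ρ t ∧ pos τ a ρ t = x}.Finite

open Classical in
/-- Total number of visits to `x` by `n` sequential rotor walks with empty sink,
set to `⊤` if one of the `n` walks fails to be transient. -/
noncomputable def SvisT (τ : V → V → V) (a : V) (ρ : V → V) (n : ℕ) (x : V) : ℕ∞ :=
  if ∀ i < n, IsTransientWalk τ ∅ a ((finalConf τ ∅ a)^[i] ρ) then Svis τ ∅ a ρ n x else ⊤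

/-- The local mechanisms map neighbors to neighbors and have a single orbit on each
neighborhood (off the sink). -/
def ValidMechanism (G : SimpleGraph V) (Z : Set V) (τ : V → V → V) : Prop :=
  ∀ x ∉ Z, (∀ y, G.Adj x y → G.Adj x (τ x y)) ∧
    ∀ y, G.Adj x y → ∀ z, G.Adj x z → ∃ i : ℕ, (τ x)^[i] y = z

/-- A rotor configuration: every rotor (off the sink) points to a neighbor. -/
def ValidConfig (G : SimpleGraph V) (Z : Set V) (ρ : V → V) : Prop :=
  ∀ x ∉ Z, G.Adj x (ρ x)

/-- Time-`t` distribution of the simple random walk started at `a` and killed on `Z`. -/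
noncomputable def srw (G : SimpleGraph V) [G.LocallyFinite] (Z : Set V) (a : V) :
    ℕ → V → ℝ≥0∞
  | 0 => Set.indicator {a} 1
  | t + 1 => fun x =>
      ∑' y : V, Set.indicator {y | G.Adj y x ∧ y ∉ Z}
        (fun y => srw G Z a t y / (G.degree y : ℝ≥0∞)) y

/-- Green function: the expected number of visits to a vertex, strictly before hitting `Z`,
of the simple random walk started at `a`. -/
noncomputable def green (G : SimpleGraph V) [G.LocallyFinite] (Z : Set V) (a : V) : V → ℝ≥0∞ :=
  Set.indicator Zᶜ (fun x => ∑' t : ℕ, srw G Z a t x)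

/-- The graph is transient: the Green function (with empty sink) is finite. -/
def TransientGraph (G : SimpleGraph V) [G.LocallyFinite] : Prop :=
  ∀ a x : V, green G ∅ a x < ⊤

/-- A `Z`-oriented spanning forest, encoded as a rotor configuration: off `Z` it points to a
neighbor, on `Z` it is normalized to the identity, and every vertex eventually reaches `Z`. -/
def IsOSF (G : SimpleGraph V) (Z : Set V) (ρ : V → V) : Prop :=
  (∀ x ∉ Z, G.Adj x (ρ x)) ∧ (∀ x ∈ Z, ρ x = x) ∧ ∀ x : V, ∃ n : ℕ, ρ^[n] x ∈ Z

/-- An oriented spanning forest of an infinite graph: every vertex has out-degree one along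
an edge and there is no directed cycle. -/
def IsOSFInf (G : SimpleGraph V) (ρ : V → V) : Prop :=
  (∀ x, G.Adj x (ρ x)) ∧ ∀ x : V, ∀ n > 0, ρ^[n] x ≠ x

/-- A spanning forest of the ball of radius `R` around `a`, oriented toward the boundary
sphere (the sink), normalized to the identity outside the open ball. -/
def IsOSFBall (G : SimpleGraph V) (a : V) (R : ℕ) (ρ : V → V) : Prop :=
  (∀ x, G.dist a x < R → G.Adj x (ρ x)) ∧
  (∀ x, ¬ G.dist a x < R → ρ x = x) ∧
  ∀ x, G.dist a x < R → ∃ n : ℕ, G.dist a (ρ^[n] x) = R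

instance : MeasurableSpace (V → V) := ⊤

/-- `μ` is the oriented wired uniform spanning forest measure of `G` (with respect to the
exhaustion by balls around `a`): it is a probability measure supported on oriented spanning
forests whose finite-dimensional marginals are the limits of the uniform measures on
boundary-oriented spanning forests of the balls. -/
def IsOWUSF (G : SimpleGraph V) (a : V) (μ : Measure (V → V)) : Prop :=
  IsProbabilityMeasure μ ∧
  (∀ᵐ ρ ∂μ, IsOSFInf G ρ) ∧
  ∀ B : Finset (V × V),
    Tendsto (fun R : ℕ =>
        (({ρ : V → V | IsOSFBall G a R ρ ∧ ∀ e ∈ B, ρ e.1 = e.2}.ncard : ℝ) /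
          ({ρ : V → V | IsOSFBall G a R ρ}.ncard : ℝ))) atTop
      (nhds ((μ {ρ : V → V | ∀ e ∈ B, ρ e.1 = e.2}).toReal))

/-- Vertex-transitivity. -/
def VertexTransitive (G : SimpleGraph V) : Prop :=
  ∀ u v : V, ∃ φ : G ≃g G, φ u = v

/-- `μ` is stationary for the rotor walk (empty sink) started at `a`: almost every walk is
transient and the final rotor configuration again has law `μ`. -/
def RWStationary (τ : V → V → V) (a : V) (μ : Measure (V → V)) : Prop :=
  (∀ᵐ ρ ∂μ, IsTransientWalk τ ∅ a ρ) ∧ μ.map (finalConf τ ∅ a) = μ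

/-!
Between two visits to `y` the rotor at `y` stays put, and since rotors are never reset, the
`k`-th visit to `y` over all `m` walks sends the walker to `(τ y)^[k+1] (ρ y)`. If `y` is visited
`N` times in total, the edge `(y, x)` is therefore traversed once for each `k < N` with
`(τ y)^[k+1] (ρ y) = x`, and the rotor at `y` ends at `(τ y)^[N] (ρ y)`. As `τ y` cycles through
the `deg y` neighbours of `y`, the return `σ^m ρ = ρ` forces `N` to be a multiple of `deg y`, and
within each full turn the rotor points to `x` exactly once. If some walk visits `y` infinitely
often, both totals are infinite.
-/

section Iterates

variable {α : Type*} {f : α → α} {c x : α}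

theorem infinite_setOf_iterate_eq {s : Set α} (hmaps : Set.MapsTo f s s)
    (horb : ∀ z ∈ s, ∀ w ∈ s, ∃ i, f^[i] z = w) (hc : c ∈ s) (hx : x ∈ s) :
    {k | f^[k] c = x}.Infinite := by
  refine Set.infinite_of_forall_exists_gt fun K => ?_
  obtain ⟨i, hi⟩ := horb _ (hmaps.iterate (K + 1) hc) x hx
  exact ⟨i + (K + 1), by rwa [Set.mem_ofPred_eq, Function.iterate_add_apply], by omega⟩

theorem minimalPeriod_eq_card [DecidableEq α] {s : Finset α} (hmaps : Set.MapsTo f s s)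
    (hc : c ∈ s) (horb : ∀ w ∈ s, ∃ i, f^[i] c = w) (hpos : 0 < Function.minimalPeriod f c) :
    Function.minimalPeriod f c = s.card := by
  have horbit : (Finset.range (Function.minimalPeriod f c)).image (f^[·] c) = s := by
    ext w
    simp only [Finset.mem_image, Finset.mem_range]
    constructor
    · rintro ⟨k, -, rfl⟩
      exact hmaps.iterate k hc
    · intro hw
      obtain ⟨i, rfl⟩ := horb w hw
      exact ⟨i % _, Nat.mod_lt i hpos, Function.iterate_mod_minimalPeriod_eq⟩
  rw [← horbit, Finset.card_image_of_injOn, Finset.card_range]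
  simpa only [Finset.coe_range] using Function.iterate_injOn_Iio_minimalPeriod

theorem count_iterate_eq_minimalPeriod_mul [DecidableEq α] (hx : ∃ i, f^[i] c = x)
    (hpos : 0 < Function.minimalPeriod f c) (q : ℕ) :
    Nat.count (fun k => f^[k] c = x) (Function.minimalPeriod f c * q) = q := by
  set p := Function.minimalPeriod f c
  have hone : Nat.count (fun k => f^[k] c = x) p = 1 := by
    obtain ⟨i, rfl⟩ := hx
    rw [Nat.count_eq_card_filter_range, Finset.card_eq_one]
    refine ⟨i % p, Finset.ext fun k => ?_⟩
    simp only [Finset.mem_filter, Finset.mem_range, Finset.mem_singleton]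
    rw [← Function.iterate_mod_minimalPeriod_eq (n := i)]
    constructor
    · rintro ⟨hk, hki⟩
      exact (Function.iterate_eq_iterate_iff_of_lt_minimalPeriod hk (Nat.mod_lt i hpos)).1 hki
    · rintro rfl
      exact ⟨Nat.mod_lt i hpos, rfl⟩
  induction q with
  | zero => simp
  | succ q ih =>
    have hperiod : ∀ k, f^[p * q + k] c = f^[k] c := fun k => by
      rw [add_comm, Function.iterate_add_apply,
        ((Function.isPeriodicPt_minimalPeriod f c).mul_const q).eq]
    rw [Nat.mul_succ, Nat.count_add, ih]
    simp only [hperiod, hone]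

theorem card_mul_count_iterate_eq [DecidableEq α] {s : Finset α} (hmaps : Set.MapsTo f s s)
    (hc : c ∈ s) (horb : ∀ w ∈ s, ∃ i, f^[i] c = w) (hx : x ∈ s) {N : ℕ} (hN : f^[N] c = c) :
    s.card * Nat.count (fun k => f^[k] c = x) N = N := by
  rcases N.eq_zero_or_pos with rfl | hN0
  · simp
  have hpos := Function.IsPeriodicPt.minimalPeriod_pos hN0 hN
  obtain ⟨q, rfl⟩ := Function.IsPeriodicPt.minimalPeriod_dvd hN
  rw [count_iterate_eq_minimalPeriod_mul (horb x hx) hpos, minimalPeriod_eq_card hmaps hc horb hpos]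

end Iterates

theorem encard_setOf_lt_and_eq_count (P : ℕ → Prop) [DecidablePred P] (T : ℕ) :
    {t | t < T ∧ P t}.encard = Nat.count P T := by
  rw [Nat.count_eq_card_filter_range, ← Set.encard_coe_eq_coe_finsetCard]
  congr 1
  ext t
  simp

section SingleWalk

variable {τ : V → V → V} {Z : Set V} {a : V} {ρ : V → V} {x y : V}

def visits (τ : V → V → V) (a : V) (ρ : V → V) (y : V) : ℕ → ℕ :=
  Nat.count (fun s => pos τ a ρ s = y)

def aliveVisits (τ : V → V → V) (Z : Set V) (a : V) (ρ : V → V) (y : V) : Set ℕ :=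
  {t | aliveAt τ Z a ρ t ∧ pos τ a ρ t = y}

theorem pos_succ (t : ℕ) :
    pos τ a ρ (t + 1) = τ (pos τ a ρ t) (conf τ a ρ t (pos τ a ρ t)) := rfl

theorem conf_succ (t : ℕ) :
    conf τ a ρ (t + 1) = Function.update (conf τ a ρ t) (pos τ a ρ t) (pos τ a ρ (t + 1)) := rfl

theorem conf_succ_apply_of_pos_ne {t : ℕ} (h : pos τ a ρ t ≠ y) :
    conf τ a ρ (t + 1) y = conf τ a ρ t y := by
  rw [conf_succ, Function.update_of_ne (Ne.symm h)]

theorem conf_apply_eq_iterate_visits (t : ℕ) :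
    conf τ a ρ t y = (τ y)^[visits τ a ρ y t] (ρ y) := by
  induction t with
  | zero => rfl
  | succ t ih =>
    rw [visits, Nat.count_succ, ← visits]
    by_cases h : pos τ a ρ t = y
    · rw [if_pos h, conf_succ, h, Function.update_self, pos_succ, h, ih,
        Function.iterate_succ_apply']
    · rw [if_neg h, conf_succ_apply_of_pos_ne h, ih, add_zero]

theorem pos_succ_eq_iterate_visits {t : ℕ} (h : pos τ a ρ t = y) :
    pos τ a ρ (t + 1) = (τ y)^[visits τ a ρ y t + 1] (ρ y) := by
  rw [pos_succ, h, conf_apply_eq_iterate_visits, Function.iterate_succ_apply']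

theorem count_edge_eq_count_iterate_visits (T : ℕ) :
    Nat.count (fun t => pos τ a ρ t = y ∧ pos τ a ρ (t + 1) = x) T =
      Nat.count (fun k => (τ y)^[k + 1] (ρ y) = x) (visits τ a ρ y T) := by
  induction T with
  | zero => rfl
  | succ T ih =>
    rw [visits, Nat.count_succ, Nat.count_succ, ← visits, ih]
    by_cases h : pos τ a ρ T = y
    · simp only [h, true_and, if_true, Nat.count_succ, pos_succ_eq_iterate_visits h]
    · simp only [h, false_and, if_false, add_zero]

theorem aliveAt_iff_lt_sInf (hhit : ∃ t, pos τ a ρ t ∈ Z) (t : ℕ) :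
    aliveAt τ Z a ρ t ↔ t < sInf {t | pos τ a ρ t ∈ Z} := by
  constructor
  · intro h
    by_contra hc
    exact h _ (not_lt.1 hc) (Nat.sInf_mem hhit)
  · intro h s hs hsZ
    have := Nat.sInf_le (show s ∈ {t | pos τ a ρ t ∈ Z} from hsZ)
    omega

theorem conf_apply_eq_of_forall_pos_ne {T : ℕ} (h : ∀ t ≥ T, pos τ a ρ t ≠ y) {t : ℕ}
    (ht : T ≤ t) : conf τ a ρ t y = conf τ a ρ T y := by
  induction t, ht using Nat.le_induction with
  | base => rfl
  | succ t ht ih => rw [conf_succ_apply_of_pos_ne (h t ht), ih]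

theorem exists_aliveVisits_eq_and_finalConf_apply_eq (hfin : (aliveVisits τ Z a ρ y).Finite) :
    ∃ T, aliveVisits τ Z a ρ y = {t | t < T ∧ pos τ a ρ t = y} ∧
      finalConf τ Z a ρ y = conf τ a ρ T y := by
  by_cases hhit : ∃ t, pos τ a ρ t ∈ Z
  · refine ⟨_, ?_, by rw [finalConf, if_pos hhit]⟩
    ext t
    simp only [aliveVisits, Set.mem_ofPred_eq, aliveAt_iff_lt_sInf hhit]
  have halive : ∀ t, aliveAt τ Z a ρ t := fun t s _ hs => hhit ⟨s, hs⟩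
  obtain ⟨T, hT⟩ := hfin.bddAbove
  have hlast : ∀ t, pos τ a ρ t = y → t < T + 1 := fun t ht =>
    Nat.lt_succ_of_le (hT ⟨halive t, ht⟩)
  have hconst : ∀ᶠ t in atTop, conf τ a ρ t y = conf τ a ρ (T + 1) y :=
    eventually_atTop.2 ⟨T + 1, fun t ht => conf_apply_eq_of_forall_pos_ne
      (fun s hs hsy => (hlast s hsy).not_ge hs) ht⟩
  have hex : ∃ v, ∀ᶠ t in atTop, conf τ a ρ t y = v := ⟨_, hconst⟩
  refine ⟨T + 1, ?_, ?_⟩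
  · ext t
    exact ⟨fun h => ⟨hlast t h.2, h.2⟩, fun h => ⟨halive t, h.2⟩⟩
  · rw [finalConf, if_neg hhit, dif_pos hex]
    obtain ⟨t, ht, ht'⟩ := (hex.choose_spec.and hconst).exists
    exact ht.symm.trans ht'

theorem exists_odometer_eq_and_edgeCount_eq (hfin : (aliveVisits τ Z a ρ y).Finite) :
    ∃ n : ℕ, odometer τ Z a ρ y = n ∧ finalConf τ Z a ρ y = (τ y)^[n] (ρ y) ∧
      ∀ x, edgeCount τ Z a ρ y x = Nat.count (fun k => (τ y)^[k + 1] (ρ y) = x) n := by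
  obtain ⟨T, hvis, hfinal⟩ := exists_aliveVisits_eq_and_finalConf_apply_eq hfin
  refine ⟨visits τ a ρ y T, ?_, by rw [hfinal, conf_apply_eq_iterate_visits], fun x => ?_⟩
  · change (aliveVisits τ Z a ρ y).encard = _
    rw [hvis, encard_setOf_lt_and_eq_count]
    rfl
  · have hedge : {t | aliveAt τ Z a ρ t ∧ pos τ a ρ t = y ∧ pos τ a ρ (t + 1) = x} =
        {t | t < T ∧ (pos τ a ρ t = y ∧ pos τ a ρ (t + 1) = x)} := by
      ext t
      have := Set.ext_iff.1 hvis t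
      simp only [aliveVisits, Set.mem_ofPred_eq] at this ⊢
      tauto
    rw [edgeCount, hedge, encard_setOf_lt_and_eq_count, count_edge_eq_count_iterate_visits]

theorem edgeCount_eq_top (hinf : (aliveVisits τ Z a ρ y).Infinite)
    (hx : {k | (τ y)^[k + 1] (ρ y) = x}.Infinite) : edgeCount τ Z a ρ y x = ⊤ := by
  have halive : ∀ t, aliveAt τ Z a ρ t := fun t => by
    obtain ⟨s, hs, hts⟩ := hinf.exists_gt t
    exact fun u hu => hs.1 u (by omega)
  have hP : {t | pos τ a ρ t = y}.Infinite := hinf.mono fun t ht => ht.2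
  rw [edgeCount, Set.encard_eq_top_iff]
  refine (hx.image (Nat.nth_injective hP).injOn).mono ?_
  rintro _ ⟨k, hk, rfl⟩
  have hnth := Nat.nth_mem_of_infinite hP k
  refine ⟨halive _, hnth, ?_⟩
  rw [pos_succ_eq_iterate_visits hnth, visits, Nat.count_nth_of_infinite hP]
  exact hk

theorem odometer_eq_zero_of_mem (hy : y ∈ Z) : odometer τ Z a ρ y = 0 := by
  rw [odometer, Set.encard_eq_zero, Set.eq_empty_iff_forall_notMem]
  rintro t ⟨ht, rfl⟩
  exact ht t le_rfl hy

theorem edgeCount_le_odometer : edgeCount τ Z a ρ y x ≤ odometer τ Z a ρ y :=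
  Set.encard_le_encard fun _ ht => ⟨ht.1, ht.2.1⟩

end SingleWalk

section SequentialWalks

variable {τ : V → V → V} {Z : Set V} {a : V} {ρ : V → V} {x y : V}

theorem Svis_succ (n : ℕ) : Svis τ Z a ρ (n + 1) y =
    Svis τ Z a ρ n y + odometer τ Z a ((finalConf τ Z a)^[n] ρ) y :=
  Finset.sum_range_succ _ _

theorem Sedge_succ (n : ℕ) : Sedge τ Z a ρ (n + 1) y x =
    Sedge τ Z a ρ n y x + edgeCount τ Z a ((finalConf τ Z a)^[n] ρ) y x :=
  Finset.sum_range_succ _ _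

theorem exists_Svis_eq_and_Sedge_eq_count {j : ℕ}
    (hfin : ∀ i < j, (aliveVisits τ Z a ((finalConf τ Z a)^[i] ρ) y).Finite) :
    ∃ N : ℕ, (finalConf τ Z a)^[j] ρ y = (τ y)^[N] (ρ y) ∧ Svis τ Z a ρ j y = N ∧
      ∀ x, Sedge τ Z a ρ j y x = Nat.count (fun k => (τ y)^[k + 1] (ρ y) = x) N := by
  induction j with
  | zero => exact ⟨0, rfl, rfl, fun x => rfl⟩
  | succ j ih =>
    obtain ⟨N, hconf, hvis, hedge⟩ := ih fun i hi => hfin i (by omega)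
    obtain ⟨n, hodo, hfinal, hedge'⟩ := exists_odometer_eq_and_edgeCount_eq (hfin j (by omega))
    refine ⟨N + n, ?_, by rw [Svis_succ, hvis, hodo, Nat.cast_add], fun x => ?_⟩
    · rw [Function.iterate_succ_apply', hfinal, hconf, ← Function.iterate_add_apply, add_comm]
    · rw [Sedge_succ, hedge, hedge', hconf, Nat.count_add, Nat.cast_add]
      simp only [← Function.iterate_add_apply, add_right_comm _ 1 N, add_comm _ N]

theorem Sedge_le_Svis (n : ℕ) : Sedge τ Z a ρ n y x ≤ Svis τ Z a ρ n y :=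
  Finset.sum_le_sum fun _ _ => edgeCount_le_odometer

theorem card_mul_Sedge_eq_Svis {s : Finset V} (hmaps : Set.MapsTo (τ y) s s)
    (horb : ∀ z ∈ s, ∀ w ∈ s, ∃ i, (τ y)^[i] z = w) (hρ : ρ y ∈ s) (hx : x ∈ s) {n : ℕ}
    (hper : (finalConf τ Z a)^[n] ρ = ρ)
    (hfin : ∀ i < n, (aliveVisits τ Z a ((finalConf τ Z a)^[i] ρ) y).Finite) :
    s.card * Sedge τ Z a ρ n y x = Svis τ Z a ρ n y := by
  obtain ⟨N, hconf, hvis, hedge⟩ := exists_Svis_eq_and_Sedge_eq_count hfin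
  have hN : (τ y)^[N] (τ y (ρ y)) = τ y (ρ y) := by
    rw [← Function.iterate_succ_apply, Function.iterate_succ_apply', ← hconf, hper]
  have hcount := card_mul_count_iterate_eq hmaps (hmaps hρ) (horb _ (hmaps hρ)) hx hN
  simp only [← Function.iterate_succ_apply] at hcount
  rw [hvis, hedge]
  exact_mod_cast hcount

theorem Sedge_eq_top {s : Set V} (hmaps : Set.MapsTo (τ y) s s)
    (horb : ∀ z ∈ s, ∀ w ∈ s, ∃ i, (τ y)^[i] z = w) (hρ : ρ y ∈ s) (hx : x ∈ s) {n : ℕ}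
    (hinf : ∃ i < n, (aliveVisits τ Z a ((finalConf τ Z a)^[i] ρ) y).Infinite) :
    Sedge τ Z a ρ n y x = ⊤ := by
  classical
  -- The first walk visiting `y` infinitely often starts with its rotor at `y` on the orbit of
  -- `ρ y`, because all earlier walks were finite.
  obtain ⟨hin, hiinf⟩ := Nat.find_spec hinf
  obtain ⟨N, hconf, -, -⟩ := exists_Svis_eq_and_Sedge_eq_count (τ := τ) (Z := Z) (a := a)
    (ρ := ρ) (y := y) (j := Nat.find hinf) fun k hk => by
      by_contra hk'
      exact Nat.find_min hinf hk ⟨hk.trans hin, hk'⟩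
  refine ENat.sum_eq_top.2 ⟨_, Finset.mem_range.2 hin, edgeCount_eq_top hiinf ?_⟩
  simp only [hconf, Function.iterate_succ_apply]
  exact infinite_setOf_iterate_eq hmaps horb (hmaps (hmaps.iterate N hρ)) hx

end SequentialWalks

theorem edgeCount_eq_visits_div_degree_general
    {V : Type*} [DecidableEq V]
    (G : SimpleGraph V) [G.LocallyFinite]
    (Z : Set V)
    (τ : V → V → V) (hτ : ValidMechanism G Z τ)
    (a : V) (ρ : V → V) (hρ : ValidConfig G Z ρ)
    (m : ℕ) (hper : (finalConf τ Z a)^[m] ρ = ρ)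
    (x y : V) (hadj : G.Adj x y) :
    (Sedge τ Z a ρ m y x : ℝ≥0∞) =
      (Svis τ Z a ρ m y : ℝ≥0∞) / (G.degree y : ℝ≥0∞) := by
  by_cases hyZ : y ∈ Z
  · have hvis : Svis τ Z a ρ m y = 0 :=
      Finset.sum_eq_zero fun _ _ => odometer_eq_zero_of_mem hyZ
    have hedge : Sedge τ Z a ρ m y x = 0 := nonpos_iff_eq_zero.1 (hvis ▸ Sedge_le_Svis m)
    simp [hvis, hedge]
  obtain ⟨hmaps, horb⟩ := hτ y hyZ
  have hmaps' : Set.MapsTo (τ y) (G.neighborFinset y) (G.neighborFinset y) := by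
    simpa [Set.MapsTo] using hmaps
  have horb' : ∀ z ∈ G.neighborFinset y, ∀ w ∈ G.neighborFinset y, ∃ i, (τ y)^[i] z = w := by
    simpa using horb
  have hρy : ρ y ∈ G.neighborFinset y := by simpa using hρ y hyZ
  have hx : x ∈ G.neighborFinset y := by simpa using hadj.symm
  by_cases hfin : ∀ i < m, (aliveVisits τ Z a ((finalConf τ Z a)^[i] ρ) y).Finite
  · have hdeg : (G.degree y : ℝ≥0∞) ≠ 0 := by
      exact_mod_cast ((G.degree_pos_iff_exists_adj y).2 ⟨x, hadj.symm⟩).ne'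
    rw [← card_mul_Sedge_eq_Svis hmaps' horb' hρy hx hper hfin,
      G.card_neighborFinset_eq_degree, ENat.toENNReal_mul, ENat.toENNReal_coe, mul_comm,
      ENNReal.mul_div_cancel_right hdeg (ENNReal.natCast_ne_top _)]
  · push Not at hfin
    have hedge := Sedge_eq_top hmaps' horb' hρy hx hfin
    have hvis : Svis τ Z a ρ m y = ⊤ := top_le_iff.1 (hedge ▸ Sedge_le_Svis m)
    simp [hedge, hvis, ENNReal.top_div_of_ne_top]

/-- if after `m` sequential rotor walks the rotor configuration returns to `ρ`,
then for every vertex `x` and neighbor `y` of `x`, the total number of traversals of the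
directed edge `(y,x)` equals `S_m(ρ,y) / deg(y)`. -/
theorem edgeCount_eq_visits_div_degree
    {V : Type*} [DecidableEq V] [Fintype V]
    (G : SimpleGraph V) [G.LocallyFinite] (hconn : G.Connected)
    (Z : Set V) (hZ : Z.Nonempty)
    (τ : V → V → V) (hτ : ValidMechanism G Z τ)
    (a : V) (ρ : V → V) (hρ : ValidConfig G Z ρ)
    (m : ℕ) (hper : (finalConf τ Z a)^[m] ρ = ρ)
    (x y : V) (hadj : G.Adj x y) :
    (Sedge τ Z a ρ m y x : ℝ≥0∞) =
      (Svis τ Z a ρ m y : ℝ≥0∞) / (G.degree y : ℝ≥0∞) :=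
  edgeCount_eq_visits_div_degree_general G Z τ hτ a ρ hρ m hper x y hadj

end RotorWalk
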